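/- arXiv:math/0702773 — 2 statements merged into one kernel-verified Lean document; each statement's English description precedes it below -/
import Mathlib

section
/- If a multilinear real polynomial P(X₁,...,Xₙ) sign represents parity over {0,1}ⁿ, then for every subset S ⊆ [n], the coefficient c_S of the monomial ∏_{i∈S} Xᵢ satisfies sign(c_S) = (−1)^{|S|}. -/
open MvPolynomial

/-- `P` sign represents the parity function over `A^n`. -/
def SignRepParity (n : ℕ) (A : Finset ℕ) (P : MvPolynomial (Fin n) ℝ) : Prop :=
  ∀ a : Fin n → ℕ, (∀ i, a i ∈ A) →
    (Even (∑ i, a i) → 0 < MvPolynomial.eval (fun i => (a i : ℝ)) P) ∧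
    (Odd (∑ i, a i) → MvPolynomial.eval (fun i => (a i : ℝ)) P < 0)

section Aux
variable {n : ℕ}

noncomputable def eFn (T : Finset (Fin n)) : Fin n →₀ ℕ := ∑ i ∈ T, Finsupp.single i 1

lemma eFn_apply (T : Finset (Fin n)) (j : Fin n) : eFn T j = if j ∈ T then 1 else 0 := by
  classical
  simp [eFn, Finsupp.finset_sum_apply, Finsupp.single_apply, Finset.sum_ite_eq']

lemma eFn_of_le {m : Fin n →₀ ℕ} (hm : ∀ i, m i ≤ 1) : eFn m.support = m := by
  ext j
  rw [eFn_apply]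
  by_cases h : j ∈ m.support
  · have := Finsupp.mem_support_iff.mp h
    have := hm j
    simp [h]; omega
  · simp [h, Finsupp.notMem_support_iff.mp h]

lemma eval_ind (P : MvPolynomial (Fin n) ℝ) (hml : ∀ m ∈ P.support, ∀ i, m i ≤ 1)
    (T : Finset (Fin n)) :
    eval (fun i => if i ∈ T then (1:ℝ) else 0) P = ∑ T' ∈ T.powerset, P.coeff (eFn T') := by
  classical
  rw [eval_eq]
  have hprod : ∀ m : Fin n →₀ ℕ, m ∈ P.support →
      (∏ i ∈ m.support, (if i ∈ T then (1:ℝ) else 0) ^ m i)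
        = if m.support ⊆ T then 1 else 0 := by
    intro m _
    by_cases h : m.support ⊆ T
    · rw [if_pos h]
      exact Finset.prod_eq_one fun i hi => by rw [if_pos (h hi), one_pow]
    · rw [if_neg h]
      obtain ⟨i, hi, hiT⟩ := Finset.not_subset.mp h
      refine Finset.prod_eq_zero hi ?_
      rw [if_neg hiT]
      exact zero_pow (Finsupp.mem_support_iff.mp hi)
  calc (∑ m ∈ P.support, P.coeff m * ∏ i ∈ m.support, (if i ∈ T then (1:ℝ) else 0) ^ m i)
      = ∑ m ∈ P.support.filter (fun m => m.support ⊆ T), P.coeff m := by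
        rw [Finset.sum_filter]
        exact Finset.sum_congr rfl fun m hm => by rw [hprod m hm, mul_ite, mul_one, mul_zero]
    _ = ∑ T' ∈ T.powerset.filter (fun T' => eFn T' ∈ P.support), P.coeff (eFn T') := by
        refine (Finset.sum_nbij' (fun T' => eFn T') (fun m => m.support) ?_ ?_ ?_ ?_ ?_).symm
        · intro T' hT'
          simp only [Finset.mem_filter, Finset.mem_powerset] at hT'
          simp only [Finset.mem_filter]
          refine ⟨hT'.2, ?_⟩
          intro j hj
          have := eFn_apply T' j
          by_cases h : j ∈ T'
          · exact hT'.1 h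
          · exact absurd (Finsupp.mem_support_iff.mp hj) (by simp [eFn_apply, h])
        · intro m hm
          simp only [Finset.mem_filter] at hm ⊢
          rw [eFn_of_le (hml m hm.1)]
          exact ⟨Finset.mem_powerset.mpr hm.2, hm.1⟩
        · intro T' hT'
          ext j
          simp [eFn_apply, Finsupp.mem_support_iff]
        · intro m hm
          simp only [Finset.mem_filter] at hm
          exact eFn_of_le (hml m hm.1)
        · intro T' _; rfl
    _ = ∑ T' ∈ T.powerset, P.coeff (eFn T') := by
        refine Finset.sum_filter_of_ne fun T' _ h => ?_
        exact MvPolynomial.mem_support_iff.mpr h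

lemma real_alt {α : Type*} [DecidableEq α] (x : Finset α) :
    ∑ m ∈ x.powerset, (-1:ℝ)^m.card = if x = ∅ then 1 else 0 := by
  have h := Finset.sum_powerset_neg_one_pow_card (x := x)
  calc ∑ m ∈ x.powerset, (-1:ℝ)^m.card
      = ((∑ m ∈ x.powerset, (-1:ℤ)^m.card : ℤ) : ℝ) := by push_cast; rfl
    _ = _ := by rw [h]; split <;> norm_num

lemma innerSum (S T' : Finset (Fin n)) (hT' : T' ⊆ S) :
    ∑ T ∈ S.powerset.filter (fun T => T' ⊆ T), (-1:ℝ)^T.card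
      = (-1:ℝ)^T'.card * (if T' = S then 1 else 0) := by
  classical
  have key : ∑ T ∈ S.powerset.filter (fun T => T' ⊆ T), (-1:ℝ)^T.card
      = ∑ U ∈ (S \ T').powerset, (-1:ℝ)^T'.card * (-1:ℝ)^U.card := by
    refine Finset.sum_nbij' (fun T => T \ T') (fun U => T' ∪ U) ?_ ?_ ?_ ?_ ?_
    · intro T hT
      simp only [Finset.mem_filter, Finset.mem_powerset] at hT ⊢
      exact Finset.sdiff_subset_sdiff hT.1 (by rfl)
    · intro U hU
      simp only [Finset.mem_powerset] at hU
      simp only [Finset.mem_filter, Finset.mem_powerset]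
      exact ⟨Finset.union_subset hT' (hU.trans (Finset.sdiff_subset)), Finset.subset_union_left⟩
    · intro T hT
      simp only [Finset.mem_filter, Finset.mem_powerset] at hT
      exact Finset.union_sdiff_of_subset hT.2
    · intro U hU
      simp only [Finset.mem_powerset] at hU
      have hd : Disjoint T' U :=
        Finset.disjoint_left.mpr fun a ha haU => (Finset.mem_sdiff.mp (hU haU)).2 ha
      exact Finset.union_sdiff_cancel_left hd
    · intro T hT
      simp only [Finset.mem_filter, Finset.mem_powerset] at hT
      have h2 := Finset.card_sdiff_add_card_eq_card hT.2
      show (-1:ℝ)^T.card = (-1:ℝ)^T'.card * (-1:ℝ)^(T \ T').card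
      rw [← pow_add]
      congr 1
      omega
  rw [key, ← Finset.mul_sum, real_alt]
  congr 1
  simp only [Finset.sdiff_eq_empty_iff_subset]
  by_cases h : T' = S
  · simp [h]
  · rw [if_neg h, if_neg (fun hs => h (Finset.Subset.antisymm hT' hs))]

lemma main_id (P : MvPolynomial (Fin n) ℝ) (hml : ∀ m ∈ P.support, ∀ i, m i ≤ 1)
    (S : Finset (Fin n)) :
    ∑ T ∈ S.powerset, (-1:ℝ)^T.card * eval (fun i => if i ∈ T then (1:ℝ) else 0) P
      = (-1:ℝ)^S.card * P.coeff (eFn S) := by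
  classical
  calc ∑ T ∈ S.powerset, (-1:ℝ)^T.card * eval (fun i => if i ∈ T then (1:ℝ) else 0) P
      = ∑ T ∈ S.powerset, ∑ T' ∈ T.powerset, (-1:ℝ)^T.card * P.coeff (eFn T') := by
        simp_rw [eval_ind P hml, Finset.mul_sum]
    _ = ∑ T' ∈ S.powerset, ∑ T ∈ S.powerset.filter (fun T => T' ⊆ T),
          (-1:ℝ)^T.card * P.coeff (eFn T') := by
        refine Finset.sum_comm' fun T T' => ?_
        simp only [Finset.mem_powerset, Finset.mem_filter]
        constructor
        · rintro ⟨h1, h2⟩; exact ⟨⟨h1, h2⟩, h2.trans h1⟩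
        · rintro ⟨⟨h1, h2⟩, _⟩; exact ⟨h1, h2⟩
    _ = ∑ T' ∈ S.powerset, if T' = S then (-1:ℝ)^T'.card * P.coeff (eFn T') else 0 := by
        refine Finset.sum_congr rfl fun T' hT' => ?_
        rw [← Finset.sum_mul, innerSum S T' (Finset.mem_powerset.mp hT')]
        split <;> ring
    _ = (-1:ℝ)^S.card * P.coeff (eFn S) := by
        rw [Finset.sum_ite_eq' S.powerset S
          (fun T' => (-1:ℝ)^T'.card * P.coeff (eFn T'))]
        rw [if_pos (Finset.mem_powerset.mpr (le_refl S))]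


lemma eval_sign (P : MvPolynomial (Fin n) ℝ) (hrep : SignRepParity n {0, 1} P)
    (T : Finset (Fin n)) :
    0 < (-1:ℝ)^T.card * eval (fun i => if i ∈ T then (1:ℝ) else 0) P := by
  classical
  have h := hrep (fun i => if i ∈ T then 1 else 0)
    (fun i => by by_cases h : i ∈ T <;> simp [h])
  have hsum : (∑ i, if i ∈ T then (1:ℕ) else 0) = T.card := by
    rw [Finset.sum_ite_mem, Finset.univ_inter]
    simp
  have hcast : (fun i => (((if i ∈ T then 1 else 0 : ℕ)) : ℝ))
      = fun i => if i ∈ T then (1:ℝ) else 0 := by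
    funext i; split <;> simp
  rw [hsum, hcast] at h
  rcases Nat.even_or_odd T.card with he | ho
  · rw [he.neg_one_pow, one_mul]; exact h.1 he
  · rw [ho.neg_one_pow]; have := h.2 ho; nlinarith

end Aux

theorem coeff_sign_of_multilinear_parity_signrep (n : ℕ) (P : MvPolynomial (Fin n) ℝ)
    (hml : ∀ m ∈ P.support, ∀ i, m i ≤ 1)
    (hrep : SignRepParity n {0, 1} P) :
    ∀ S : Finset (Fin n),
      (Even S.card → 0 < P.coeff (∑ i ∈ S, Finsupp.single i 1)) ∧
      (Odd S.card → P.coeff (∑ i ∈ S, Finsupp.single i 1) < 0) := by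
  intro S
  have hpos : 0 < (-1:ℝ)^S.card * P.coeff (eFn S) := by
    rw [← main_id P hml S]
    exact Finset.sum_pos (fun T _ => eval_sign P hrep T) ⟨∅, Finset.empty_mem_powerset S⟩
  have he : eFn S = ∑ i ∈ S, Finsupp.single i 1 := rfl
  rw [he] at hpos
  constructor
  · intro h; rwa [h.neg_one_pow, one_mul] at hpos
  · intro h; rw [h.neg_one_pow] at hpos; nlinarith
end

section
/- Let 0 < a₁ < ... < a_{k−1} be positive reals and 0 = d₀ < d₁ < ... < d_{k−1} be integers. Let W be the k×k matrix with W_{0,0}=1, W_{0,j}=0 for j ≥ 1, and W_{i,j} = aᵢ^{dⱼ} for i ≥ 1. Then W is invertible and the entries of W⁻¹ satisfy: (W⁻¹)_{0,j} = 0 for j ≥ 1, and otherwise sign((W⁻¹)_{i,j}) = (−1)^{i+j}. -/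
/-!
Descartes' rule of signs bounds the number of positive roots of a real polynomial by the number
of its nonzero coefficients minus one. Expanding a generalized Vandermonde determinant with
positive increasing nodes along its last row exhibits it as the value at the last node of a
polynomial with one term per exponent, whose leading coefficient is the smaller determinant
(positive by induction) and which vanishes at the other nodes. These are all its positive roots,
and it is positive at infinity, so it is positive at the last node. With the node `0` and the
exponent `0` the first row is a unit vector, so the determinant and the cofactors reduce to such
determinants, except the cofactors giving the entries `(0, j)`, `j ≠ 0`, of the inverse: these
have a zero row.
-/

open Finset Filter Polynomial

namespace Polynomial

theorem signVariations_lt_card_support {R : Type*} [Semiring R] [LinearOrder R] {P : R[X]}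
    (hP : P ≠ 0) : P.signVariations < #P.support := by
  induction hn : #P.support generalizing P with
  | zero => exact absurd (card_eq_zero.1 hn) (by simpa using hP)
  | succ n ih =>
    by_cases hlead : P.eraseLead = 0
    · rw [← eraseLead_add_monomial_natDegree_leadingCoeff P, hlead, zero_add,
        signVariations_monomial]
      omega
    · have hlt := ih hlead (by rw [card_support_eraseLead, hn, Nat.add_sub_cancel])
      have hle := signVariations_le_eraseLead_succ P
      omega

theorem card_lt_card_support_of_forall_pos_isRoot {R : Type*} [CommRing R] [LinearOrder R]
    [IsStrictOrderedRing R] {P : R[X]} (hP : P ≠ 0) {s : Finset R}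
    (hs : ∀ x ∈ s, 0 < x ∧ P.IsRoot x) : #s < #P.support :=
  calc #s ≤ P.roots.countP (0 < ·) := by
        rw [Multiset.countP_eq_card_filter]
        refine Multiset.card_le_card ((Multiset.le_iff_subset s.nodup).2 fun x hx => ?_)
        exact Multiset.mem_filter.2 ⟨(mem_roots hP).2 (hs x hx).2, (hs x hx).1⟩
    _ ≤ P.signVariations := roots_countP_pos_le_signVariations P
    _ < #P.support := signVariations_lt_card_support hP

theorem card_support_sum_C_mul_X_pow_le {ι R : Type*} [Semiring R] (s : Finset ι) (c : ι → R)
    (e : ι → ℕ) : #(∑ i ∈ s, C (c i) * X ^ e i).support ≤ #s := by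
  refine (card_le_card (t := s.image e) fun m hm => ?_).trans card_image_le
  rw [mem_support_iff, finsetSum_coeff] at hm
  obtain ⟨i, hi, h⟩ := exists_ne_zero_of_sum_ne_zero hm
  rw [coeff_C_mul_X_pow] at h
  exact mem_image.2 ⟨i, hi, (ite_ne_right_iff.1 h).1.symm⟩

theorem leadingCoeff_sum_C_mul_X_pow_of_strictMono {R : Type*} [Semiring R] {n : ℕ}
    {c : Fin (n + 1) → R} {e : Fin (n + 1) → ℕ} (he : StrictMono e) (hc : c (Fin.last n) ≠ 0) :
    (∑ i, C (c i) * X ^ e i).leadingCoeff = c (Fin.last n) := by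
  have hcoeff : (∑ i, C (c i) * X ^ e i).coeff (e (Fin.last n)) = c (Fin.last n) := by
    simp [finsetSum_coeff, he.injective.eq_iff]
  have hdeg : (∑ i, C (c i) * X ^ e i).natDegree ≤ e (Fin.last n) :=
    natDegree_sum_le_of_forall_le _ _ fun i _ =>
      (natDegree_C_mul_X_pow_le _ _).trans (he.monotone (Fin.le_last i))
  rw [leadingCoeff, natDegree_eq_of_le_of_coeff_ne_zero hdeg (hcoeff ▸ hc), hcoeff]

theorem eventually_pos_of_leadingCoeff_pos {𝕜 : Type*} [NormedField 𝕜] [LinearOrder 𝕜]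
    [IsStrictOrderedRing 𝕜] [OrderTopology 𝕜] {P : 𝕜[X]} (h : 0 < P.leadingCoeff) :
    ∀ᶠ x in atTop, 0 < P.eval x := by
  rcases lt_or_ge 0 P.degree with hdeg | hdeg
  · exact (P.tendsto_atTop_of_leadingCoeff_nonneg hdeg h.le).eventually_gt_atTop 0
  · rw [eq_C_of_degree_le_zero hdeg] at h ⊢
    exact Eventually.of_forall fun _ => by simpa using h

theorem eval_pos_of_forall_lt_of_card_support_le {P : ℝ[X]} (hlead : 0 < P.leadingCoeff)
    {s : Finset ℝ} (hs : ∀ y ∈ s, 0 < y ∧ P.IsRoot y) (hsupp : #P.support ≤ #s + 1) {t : ℝ}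
    (ht0 : 0 < t) (ht : ∀ y ∈ s, y < t) : 0 < P.eval t := by
  by_contra! hneg
  obtain ⟨T, htT, hT⟩ :=
    ((eventually_ge_atTop t).and (eventually_pos_of_leadingCoeff_pos hlead)).exists
  obtain ⟨r, hr, hroot⟩ := intermediate_value_Icc htT P.continuous.continuousOn ⟨hneg, hT.le⟩
  -- `r ≥ t` is one positive root more than `P` can have
  have hrs : r ∉ s := fun hr' => (ht r hr').not_ge hr.1
  have hcard := card_lt_card_support_of_forall_pos_isRoot (leadingCoeff_ne_zero.1 hlead.ne')
    (s := insert r s) (by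
      simp only [mem_insert, forall_eq_or_imp]
      exact ⟨⟨ht0.trans_le hr.1, hroot⟩, hs⟩)
  rw [card_insert_of_notMem hrs] at hcard
  omega

end Polynomial

namespace Matrix

section CommRing

variable {R : Type*} [CommRing R]

def genVandermonde {m n : Type*} (x : m → R) (e : n → ℕ) : Matrix m n R :=
  of fun i j => x i ^ e j

@[simp]
theorem genVandermonde_apply {m n : Type*} (x : m → R) (e : n → ℕ) (i : m) (j : n) :
    genVandermonde x e i j = x i ^ e j :=
  rfl

@[simp]
theorem genVandermonde_submatrix {l m n o : Type*} (x : m → R) (e : n → ℕ) (f : l → m)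
    (g : o → n) : (genVandermonde x e).submatrix f g = genVandermonde (x ∘ f) (e ∘ g) :=
  rfl

theorem det_genVandermonde_snoc {n : ℕ} (y : Fin n → R) (t : R) (e : Fin (n + 1) → ℕ) :
    (genVandermonde (Fin.snoc y t : Fin (n + 1) → R) e).det =
      ∑ j : Fin (n + 1),
        (-1) ^ (n + j : ℕ) * (genVandermonde y (e ∘ j.succAbove)).det * t ^ e j := by
  rw [det_succ_row _ (Fin.last n)]
  refine sum_congr rfl fun j _ => ?_
  have hrows : (Fin.snoc y t : Fin (n + 1) → R) ∘ (Fin.last n).succAbove = y := by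
    ext i
    simp
  rw [genVandermonde_submatrix, hrows, genVandermonde_apply, Fin.snoc_last, Fin.val_last]
  ring

theorem det_genVandermonde_eq_zero {n : Type*} [Fintype n] [DecidableEq n] {x : n → R}
    {e : n → ℕ} (r : n) (hr : x r = 0) (he : ∀ j, e j ≠ 0) : (genVandermonde x e).det = 0 :=
  det_eq_zero_of_row_eq_zero r fun j => by simp [hr, he j]

theorem det_genVandermonde_eq_det_succ {n : ℕ} {x : Fin (n + 1) → R} {e : Fin (n + 1) → ℕ}
    (hx0 : x 0 = 0) (he0 : e 0 = 0) (he : ∀ j ≠ 0, e j ≠ 0) :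
    (genVandermonde x e).det = (genVandermonde (x ∘ Fin.succ) (e ∘ Fin.succ)).det := by
  rw [det_succ_row_zero, Fintype.sum_eq_single 0 fun j hj => by simp [hx0, he j hj]]
  simp [hx0, he0]

end CommRing

theorem inv_apply_eq_det_submatrix_div {K : Type*} [Field K] {n : ℕ}
    (A : Matrix (Fin (n + 1)) (Fin (n + 1)) K) (i j : Fin (n + 1)) :
    A⁻¹ i j = (-1) ^ (j + i : ℕ) * (A.submatrix j.succAbove i.succAbove).det / A.det := by
  rw [inv_def, smul_apply, adjugate_fin_succ_eq_det_submatrix, Ring.inverse_eq_inv', smul_eq_mul,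
    div_eq_inv_mul]

theorem det_genVandermonde_pos {n : ℕ} {x : Fin n → ℝ} {e : Fin n → ℕ} (hx : StrictMono x)
    (hx0 : ∀ i, 0 < x i) (he : StrictMono e) : 0 < (genVandermonde x e).det := by
  induction n with
  | zero => simp
  | succ n ih =>
    rw [← Fin.snoc_init_self x]
    set y := Fin.init x
    set c : Fin (n + 1) → ℝ := fun j =>
      (-1) ^ (n + j : ℕ) * (genVandermonde y (e ∘ j.succAbove)).det
    set P : ℝ[X] := ∑ j, C (c j) * X ^ e j
    have hP : ∀ t, P.eval t = (genVandermonde (Fin.snoc y t : Fin (n + 1) → ℝ) e).det := by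
      simp [P, c, eval_finsetSum, det_genVandermonde_snoc]
    have hy : StrictMono y := hx.comp Fin.strictMono_castSucc
    have hc : 0 < c (Fin.last n) := by
      simpa [c, Fin.succAbove_last, ← two_mul, pow_mul] using
        ih hy (fun i => hx0 _) (he.comp Fin.strictMono_castSucc)
    rw [← hP]
    refine eval_pos_of_forall_lt_of_card_support_le
      (leadingCoeff_sum_C_mul_X_pow_of_strictMono he hc.ne' ▸ hc) (s := univ.image y) ?_ ?_
      (hx0 _) ?_
    · refine forall_mem_image.2 fun i _ => ⟨hx0 _, ?_⟩
      rw [IsRoot, hP]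
      exact det_zero_of_row_eq (Fin.castSucc_lt_last i).ne (by ext; simp [y, Fin.init])
    · rw [card_image_of_injective _ hy.injective, card_univ, Fintype.card_fin]
      simpa using card_support_sum_C_mul_X_pow_le univ c e
    · exact forall_mem_image.2 fun i _ => hx (Fin.castSucc_lt_last i)

section ZeroNode

variable {n : ℕ} {x : Fin (n + 1) → ℝ} {e : Fin (n + 1) → ℕ}

theorem det_genVandermonde_pos_of_zero (hx : StrictMono x) (hx0 : x 0 = 0) (he : StrictMono e)
    (he0 : e 0 = 0) : 0 < (genVandermonde x e).det := by
  rw [det_genVandermonde_eq_det_succ hx0 he0 fun j hj =>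
    (he0 ▸ he (Fin.pos_iff_ne_zero.2 hj)).ne']
  exact det_genVandermonde_pos (hx.comp Fin.strictMono_succ) (fun i => hx0 ▸ hx i.succ_pos)
    (he.comp Fin.strictMono_succ)

theorem det_genVandermonde_succAbove_pos (hx : StrictMono x) (hx0 : x 0 = 0)
    (he : StrictMono e) (he0 : e 0 = 0) {i j : Fin (n + 1)} (hij : i = 0 → j = 0) :
    0 < (genVandermonde (x ∘ j.succAbove) (e ∘ i.succAbove)).det := by
  rcases eq_or_ne j 0 with rfl | hj
  · exact det_genVandermonde_pos (hx.comp (Fin.strictMono_succAbove 0))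
      (fun r => by simpa [hx0] using hx r.succ_pos) (he.comp (Fin.strictMono_succAbove i))
  · obtain ⟨m, rfl⟩ : ∃ m, n = m + 1 :=
      Nat.exists_eq_succ_of_ne_zero fun hn => hj (by subst hn; exact Fin.fin_one_eq_zero j)
    have hi : i ≠ 0 := mt hij hj
    exact det_genVandermonde_pos_of_zero (hx.comp (Fin.strictMono_succAbove j))
      (by simp [Fin.succAbove_ne_zero_zero hj, hx0]) (he.comp (Fin.strictMono_succAbove i))
      (by simp [Fin.succAbove_ne_zero_zero hi, he0])

theorem inv_genVandermonde_zero_apply (hx0 : x 0 = 0) (he : StrictMono e) {j : Fin (n + 1)}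
    (hj : j ≠ 0) : (genVandermonde x e)⁻¹ 0 j = 0 := by
  obtain ⟨r, hr⟩ := Fin.exists_succAbove_eq hj.symm
  rw [inv_apply_eq_det_submatrix_div, genVandermonde_submatrix,
    det_genVandermonde_eq_zero r (by simp [hr, hx0]) fun l => ?_, mul_zero, zero_div]
  simpa using ((Nat.zero_le _).trans_lt (he l.succ_pos)).ne'

theorem neg_one_pow_mul_inv_genVandermonde_apply_pos (hx : StrictMono x) (hx0 : x 0 = 0)
    (he : StrictMono e) (he0 : e 0 = 0) {i j : Fin (n + 1)} (hij : i = 0 → j = 0) :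
    0 < (-1) ^ (i + j : ℕ) * (genVandermonde x e)⁻¹ i j := by
  rw [inv_apply_eq_det_submatrix_div, ← mul_div_assoc, ← mul_assoc, ← pow_add, add_comm (j : ℕ),
    Even.neg_one_pow ⟨_, rfl⟩, one_mul, genVandermonde_submatrix]
  exact div_pos (det_genVandermonde_succAbove_pos hx hx0 he he0 hij)
    (det_genVandermonde_pos_of_zero hx hx0 he he0)

end ZeroNode

end Matrix

theorem generalized_vandermonde_zero_node_inverse_general (k : ℕ) (a : Fin k → ℝ) (d : Fin k → ℕ)
    (ha0 : ∀ h0 : 0 < k, a ⟨0, h0⟩ = 0) (hd0 : ∀ h0 : 0 < k, d ⟨0, h0⟩ = 0)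
    (ha : StrictMono a) (hd : StrictMono d) :
    IsUnit (Matrix.det (Matrix.of fun i j : Fin k => a i ^ d j)) ∧
    ∀ i j : Fin k,
      (((i : ℕ) = 0 ∧ (j : ℕ) ≠ 0) →
        (Matrix.of fun i j : Fin k => a i ^ d j)⁻¹ i j = 0) ∧
      (¬((i : ℕ) = 0 ∧ (j : ℕ) ≠ 0) →
        0 < (-1 : ℝ) ^ ((i : ℕ) + (j : ℕ)) * (Matrix.of fun i j : Fin k => a i ^ d j)⁻¹ i j) := by
  cases k with
  | zero => exact ⟨by simp, fun i => i.elim0⟩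
  | succ n =>
    have ha0' : a 0 = 0 := ha0 n.succ_pos
    have hd0' : d 0 = 0 := hd0 n.succ_pos
    simp only [Fin.val_eq_zero_iff, ne_eq]
    refine ⟨(Matrix.det_genVandermonde_pos_of_zero ha ha0' hd hd0').ne'.isUnit,
      fun i j => ⟨?_, ?_⟩⟩
    · rintro ⟨rfl, hj⟩
      exact Matrix.inv_genVandermonde_zero_apply ha0' hd hj
    · intro hij
      exact Matrix.neg_one_pow_mul_inv_genVandermonde_apply_pos ha ha0' hd hd0' fun hi =>
        by_contra fun hj => hij ⟨hi, hj⟩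

theorem generalized_vandermonde_zero_node_inverse (k : ℕ) (a : Fin k → ℝ) (d : Fin k → ℕ)
    (ha0 : ∀ h0 : 0 < k, a ⟨0, h0⟩ = 0) (hd0 : ∀ h0 : 0 < k, d ⟨0, h0⟩ = 0)
    (ha_pos : ∀ i : Fin k, (i : ℕ) ≠ 0 → 0 < a i)
    (ha : StrictMono a) (hd : StrictMono d) :
    IsUnit (Matrix.det (Matrix.of fun i j : Fin k => a i ^ d j)) ∧
    ∀ i j : Fin k,
      (((i : ℕ) = 0 ∧ (j : ℕ) ≠ 0) →
        (Matrix.of fun i j : Fin k => a i ^ d j)⁻¹ i j = 0) ∧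
      (¬((i : ℕ) = 0 ∧ (j : ℕ) ≠ 0) →
        0 < (-1 : ℝ) ^ ((i : ℕ) + (j : ℕ)) * (Matrix.of fun i j : Fin k => a i ^ d j)⁻¹ i j) :=
  generalized_vandermonde_zero_node_inverse_general k a d ha0 hd0 ha hd
end
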